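/- Let k ≥ 2. Every posetted binary tree in ℬ(1 ≤ 2 ≤ ⋯ ≤ k) (over the k-element chain) can be described in a unique way as follows: choose a posetted tree (Γ, f) ∈ 𝒞(b ≤ a), and graft at every leaf of Γ labelled b the root of a posetted binary tree in ℬ(1 ≤ 2 ≤ ⋯ ≤ k−1), while leaves of Γ labelled a receive the label k. In other words, this construction defines a bijection from the set of pairs consisting of (Γ, f) ∈ 𝒞(b ≤ a) and an assignment of an element of ℬ(1 ≤ ⋯ ≤ k−1) to each b-labelled leaf of Γ, onto ℬ(1 ≤ ⋯ ≤ k). -/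
import Mathlib


/-- A (planar) binary rooted tree with leaves labelled by elements of `A`.
`node l r` has left subtree `l` and right subtree `r`. -/
inductive LTree (A : Type) : Type
  | leaf (a : A) : LTree A
  | node (l r : LTree A) : LTree A

namespace LTree

variable {A : Type}

/-- The list of leaf labels, from left to right. -/
def leafList : LTree A → List A
  | leaf a => [a]
  | node l r => leafList l ++ leafList r

/-- The number of leaves. -/
def numLeaves (t : LTree A) : ℕ := (leafList t).length

/-- The label of the rightmost leaf, i.e. of `m(root)`. -/
def rml : LTree A → A
  | leaf a => a
  | node _ r => rml r

/-- The length `d(v)` of the rightmost path from the root `v` to `m(v)`. -/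
def rdepth : LTree A → ℕ
  | leaf _ => 0
  | node _ r => rdepth r + 1

/-- Monotonicity of the leaf labelling `f : (L(Γ), ⪯) → A`:  for every subroot `v`
and every leaf `u → v` one has `f u ≤ f (m v)`.  (The subroots of `node l r` are the
root together with the subroots of `l` and the subroots of `r` other than the root of
`r`; the condition at the root of `r` is implied by the one at the root, since
`m(root) = m(root of r)`.) -/
def Mono [Preorder A] : LTree A → Prop
  | leaf _ => True
  | node l r => (∀ x ∈ leafList l ++ leafList r, x ≤ rml r) ∧ Mono l ∧ Mono r

mutual
  /-- The coefficient `b_{(Γ,f)} = ∏_{v ∈ R(Γ)} bn (d v) / t v` attached to a posetted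
  tree, for a sequence `bn` of scalars. -/
  def coeff {K : Type} [Field K] [DecidableEq A] (bn : ℕ → K) : LTree A → K
    | leaf _ => 1
    | node l r =>
        (bn (rdepth r + 1) / (((leafList l ++ leafList r).count (rml r) : ℕ) : K))
          * coeff bn l * coeffAux bn r
  /-- Product of `bn (d v) / t v` over the subroots of the tree other than its root. -/
  def coeffAux {K : Type} [Field K] [DecidableEq A] (bn : ℕ → K) : LTree A → K
    | leaf _ => 1
    | node l r => coeff bn l * coeffAux bn r
end

/-- The evaluation `Z_Γ(f)` of a leaf-labelled binary tree in a Lie algebra: take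
the bracket at every internal vertex. -/
def evalT {L : Type} [LieRing L] (g : A → L) : LTree A → L
  | leaf a => g a
  | node l r => ⁅evalT g l, evalT g r⁆

end LTree

/-- `bseq n = B_n / n!`, where `B_n` is the `n`-th Bernoulli number
(convention `B₁ = -1/2`). -/
noncomputable def bseq (n : ℕ) : ℚ := bernoulli n / n.factorial

section BCH

variable {L : Type} [LieRing L] [LieAlgebra ℚ L]

/-- `adn x n = ad(x)^n`. -/
def adn (x : L) (n : ℕ) : L → L := (fun y => ⁅x, y⁆)^[n]

/-- The summand `ad(a)^{p₁}ad(b)^{q₁}⋯ad(a)^{p_n}ad(b)^{q_n−1} b` of Dynkin's formula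
(reading `⋯ad(a)^{p_n−1} a` when `q_n = 0`). -/
def dynkinWord (a b : L) : List (ℕ × ℕ) → L
  | [] => 0
  | [(p, q)] => if q = 0 then adn a (p - 1) a else adn a p (adn b (q - 1) b)
  | (p, q) :: x :: l => adn a p (adn b q (dynkinWord a b (x :: l)))

/-- The coefficient `((-1)^{n-1}/n) ⬝ (1/(p₁!q₁!⋯p_n!q_n!))` of Dynkin's formula. -/
noncomputable def dynkinCoeff (pl : List (ℕ × ℕ)) : ℚ :=
  ((-1 : ℚ) ^ (pl.length - 1) / (pl.length : ℚ)) *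
    ((pl.map fun pq => ((pq.1.factorial * pq.2.factorial : ℕ) : ℚ)).prod)⁻¹

/-- The Baker–Campbell–Hausdorff product, defined by Dynkin's formula; on a nilpotent
Lie algebra all but finitely many summands vanish. -/
noncomputable def bch (a b : L) : L :=
  ∑ᶠ pl ∈ {pl : List (ℕ × ℕ) | pl ≠ [] ∧ ∀ pq ∈ pl, 0 < pq.1 + pq.2},
    dynkinCoeff pl • dynkinWord a b pl

end BCH

namespace LTree

/-- `AllRlm P t` holds iff every local rightmost leaf of `t` has its label satisfying
`P`.  (The local rightmost leaves of `node l r` are the rightmost leaf, of label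
`rml r`, together with the local rightmost leaves of `l` and of `r`; a single leaf lies
on no nontrivial rightmost branch.) -/
def AllRlm {A : Type} (P : A → Prop) : LTree A → Prop
  | leaf _ => True
  | node l r => P (rml r) ∧ AllRlm P l ∧ AllRlm P r

/-- Relabelling of the leaves of a tree along a map. -/
def mapL {A B : Type} (f : A → B) : LTree A → LTree B
  | leaf a => leaf (f a)
  | node l r => node (mapL f l) (mapL f r)

end LTree

/-- A tree over `Option (LTree (Fin k))` encodes a pair consisting of a posetted tree
`(Γ, f)` over the chain `b < a` together with an assignment of a tree over the chain
`1 < ⋯ < k−1` (= `Fin k`) to every `b`-labelled leaf of `Γ`: a leaf labelled `none`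
is an `a`-leaf, a leaf labelled `some s` is a `b`-leaf with assigned tree `s`.
The underlying `Fin 2`-labelled tree `Γ` is recovered by `shape`. -/
def shape : Option (LTree (Fin k)) → Fin 2 := fun o => if o.isSome then 0 else 1

/-- The grafting map: each `a`-leaf (labelled `none`) keeps the top label `k` (the last
element of `Fin (k+1)`), and at each `b`-leaf labelled `some s` the root of `s` is
grafted, its labels being included in the chain via `Fin.castSucc`. -/
def graftC (k : ℕ) : LTree (Option (LTree (Fin k))) → LTree (Fin (k + 1))
  | .leaf none => .leaf (Fin.last k)
  | .leaf (some s) => LTree.mapL Fin.castSucc s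
  | .node l r => .node (graftC k l) (graftC k r)

section GraftAux

open LTree

variable {k : ℕ}

/-- The truncation map `Fin (k+1) → Fin k`, inverse to `castSucc` on values `< k`. -/
def down (k : ℕ) (hk : 1 ≤ k) : Fin (k + 1) → Fin k :=
  fun a => ⟨min a.val (k - 1), by omega⟩

lemma down_mono (hk : 1 ≤ k) : Monotone (down k hk) := by
  intro a b h
  simp only [down, Fin.mk_le_mk, Fin.le_def] at h ⊢
  omega

lemma castSucc_down (hk : 1 ≤ k) {a : Fin (k + 1)} (ha : a ≠ Fin.last k) :
    Fin.castSucc (down k hk a) = a := by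
  have h1 : a.val ≠ k := fun h => ha (Fin.ext h)
  have h2 := a.isLt
  apply Fin.ext
  simp only [Fin.coe_castSucc, down]
  omega

lemma down_castSucc (hk : 1 ≤ k) (j : Fin k) : down k hk (Fin.castSucc j) = j := by
  have := j.isLt
  apply Fin.ext
  simp only [down, Fin.coe_castSucc]
  omega

lemma castSucc_monotone : Monotone (Fin.castSucc (n := k)) :=
  Fin.strictMono_castSucc.monotone

lemma rml_mapL {A B : Type} (f : A → B) (t : LTree A) : rml (mapL f t) = f (rml t) := by
  induction t with
  | leaf a => rfl
  | node l r ihl ihr => simpa [mapL, rml] using ihr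

lemma leafList_mapL {A B : Type} (f : A → B) (t : LTree A) :
    leafList (mapL f t) = (leafList t).map f := by
  induction t with
  | leaf a => rfl
  | node l r ihl ihr => simp [mapL, leafList, ihl, ihr]

lemma mono_mapL {A B : Type} [Preorder A] [Preorder B] {f : A → B} (hf : Monotone f)
    {t : LTree A} (ht : Mono t) : Mono (mapL f t) := by
  induction t with
  | leaf a => trivial
  | node l r ihl ihr =>
    obtain ⟨h1, h2, h3⟩ := ht
    refine ⟨?_, ihl h2, ihr h3⟩
    intro x hx
    rw [rml_mapL]
    simp only [leafList_mapL, ← List.map_append, List.mem_map] at hx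
    obtain ⟨y, hy, rfl⟩ := hx
    exact hf (h1 y hy)

lemma mapL_mapL {A B C : Type} (f : B → C) (g : A → B) (t : LTree A) :
    mapL f (mapL g t) = mapL (f ∘ g) t := by
  induction t with
  | leaf a => rfl
  | node l r ihl ihr => simp [mapL, ihl, ihr]

lemma mapL_eq_self {A : Type} {f : A → A} {t : LTree A}
    (h : ∀ x ∈ leafList t, f x = x) : mapL f t = t := by
  induction t with
  | leaf a => simp [mapL, h a (by simp [leafList])]
  | node l r ihl ihr =>
    simp only [leafList, List.mem_append] at h
    simp [mapL, ihl fun x hx => h x (Or.inl hx), ihr fun x hx => h x (Or.inr hx)]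

lemma eq_none_of_shape (o : Option (LTree (Fin k))) (h : shape o = 1) : o = none := by
  cases o with
  | none => rfl
  | some s => exact absurd h (by simp [shape])

lemma mono_of_allRlm (u : LTree (Fin 2)) (h : AllRlm (· = (1 : Fin 2)) u) : Mono u := by
  induction u with
  | leaf a => trivial
  | node l r ihl ihr =>
    obtain ⟨h1, h2, h3⟩ := h
    refine ⟨?_, ihl h2, ihr h3⟩
    intro x hx
    rw [h1]
    have := x.isLt
    simp only [Fin.le_def]
    omega

/-- The inverse of `graftC`: cut the tree along the rightmost-leaf-labelled-`k`
part, packing the remaining maximal subtrees into `some`-leaves. -/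
def ungraft (k : ℕ) (hk : 1 ≤ k) : LTree (Fin (k + 1)) → LTree (Option (LTree (Fin k)))
  | .leaf a =>
      if a = Fin.last k then .leaf none else .leaf (some (.leaf (down k hk a)))
  | .node l r =>
      if rml r = Fin.last k then .node (ungraft k hk l) (ungraft k hk r)
      else .leaf (some (mapL (down k hk) (.node l r)))

lemma rml_graftC_of_none {T : LTree (Option (LTree (Fin k)))} (h : rml T = none) :
    rml (graftC k T) = Fin.last k := by
  induction T with
  | leaf o =>
    cases o with
    | none => rfl
    | some s => simp [rml] at h
  | node l r ihl ihr =>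
    simp only [rml] at h
    simpa [graftC, rml] using ihr h

lemma rml_ungraft_of_last (hk : 1 ≤ k) {t : LTree (Fin (k + 1))} (h : rml t = Fin.last k) :
    rml (ungraft k hk t) = none := by
  induction t with
  | leaf a =>
    simp only [rml] at h
    simp [ungraft, h, rml]
  | node l r ihl ihr =>
    simp only [rml] at h
    simp [ungraft, h, rml, ihr h]

lemma mono_graftC {T : LTree (Option (LTree (Fin k)))}
    (hA : AllRlm (· = (1 : Fin 2)) (mapL shape T))
    (hs : ∀ s : LTree (Fin k), some s ∈ leafList T → Mono s) :
    Mono (graftC k T) := by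
  induction T with
  | leaf o =>
    cases o with
    | none => trivial
    | some s => exact mono_mapL castSucc_monotone (hs s (by simp [leafList]))
  | node l r ihl ihr =>
    simp only [mapL, AllRlm] at hA
    obtain ⟨h1, h2, h3⟩ := hA
    rw [rml_mapL] at h1
    have hnone : rml r = none := eq_none_of_shape _ h1
    simp only [leafList, List.mem_append] at hs
    refine ⟨?_, ihl h2 (fun s hs' => hs s (Or.inl hs')),
      ihr h3 (fun s hs' => hs s (Or.inr hs'))⟩
    intro x hx
    rw [rml_graftC_of_none hnone]
    exact Fin.le_last x

lemma ungraft_mem (hk : 1 ≤ k) {t : LTree (Fin (k + 1))} (ht : Mono t) :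
    AllRlm (· = (1 : Fin 2)) (mapL shape (ungraft k hk t)) ∧
      ∀ s : LTree (Fin k), some s ∈ leafList (ungraft k hk t) → Mono s := by
  induction t with
  | leaf a =>
    by_cases h : a = Fin.last k <;>
      simp [ungraft, h, mapL, AllRlm, leafList, Mono]
  | node l r ihl ihr =>
    by_cases h : rml r = Fin.last k
    · obtain ⟨h1, h2, h3⟩ := ht
      obtain ⟨al, sl⟩ := ihl h2
      obtain ⟨ar, sr⟩ := ihr h3
      simp only [ungraft, if_pos h, mapL, AllRlm, leafList, List.mem_append]
      refine ⟨⟨?_, al, ar⟩, ?_⟩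
      · rw [rml_mapL, rml_ungraft_of_last hk h]
        rfl
      · rintro s (hs | hs)
        exacts [sl s hs, sr s hs]
    · simp only [ungraft, if_neg h]
      refine ⟨trivial, ?_⟩
      intro s hs
      simp only [leafList, List.mem_singleton, Option.some.injEq] at hs
      subst hs
      exact mono_mapL (down_mono hk) ht

lemma down_castSucc_tree (hk : 1 ≤ k) (s : LTree (Fin k)) :
    mapL (down k hk) (mapL Fin.castSucc s) = s := by
  rw [mapL_mapL]
  exact mapL_eq_self fun x _ => down_castSucc hk x

lemma ungraft_graftC (hk : 1 ≤ k) {T : LTree (Option (LTree (Fin k)))}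
    (hA : AllRlm (· = (1 : Fin 2)) (mapL shape T)) :
    ungraft k hk (graftC k T) = T := by
  induction T with
  | leaf o =>
    cases o with
    | none => simp [graftC, ungraft]
    | some s =>
      cases s with
      | leaf j =>
        have hj : Fin.castSucc j ≠ Fin.last k := (Fin.castSucc_lt_last j).ne
        simp [graftC, mapL, ungraft, hj, down_castSucc hk j]
      | node l' r' =>
        have hj : rml (mapL (Fin.castSucc (n := k)) r') ≠ Fin.last k := by
          rw [rml_mapL]
          exact (Fin.castSucc_lt_last _).ne
        show ungraft k hk (.node (mapL Fin.castSucc l') (mapL Fin.castSucc r')) = _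
        simp only [ungraft, if_neg hj]
        show LTree.leaf (some (mapL (down k hk) (mapL Fin.castSucc (.node l' r')))) = _
        rw [down_castSucc_tree]
  | node l r ihl ihr =>
    simp only [mapL, AllRlm] at hA
    obtain ⟨h1, h2, h3⟩ := hA
    rw [rml_mapL] at h1
    have hlast : rml (graftC k r) = Fin.last k :=
      rml_graftC_of_none (eq_none_of_shape _ h1)
    simp [graftC, ungraft, hlast, ihl h2, ihr h3]

lemma graftC_ungraft (hk : 1 ≤ k) {t : LTree (Fin (k + 1))} (ht : Mono t) :
    graftC k (ungraft k hk t) = t := by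
  induction t with
  | leaf a =>
    by_cases h : a = Fin.last k
    · simp [ungraft, h, graftC]
    · simp [ungraft, h, graftC, mapL, castSucc_down hk h]
  | node l r ihl ihr =>
    by_cases h : rml r = Fin.last k
    · obtain ⟨h1, h2, h3⟩ := ht
      simp [ungraft, h, graftC, ihl h2, ihr h3]
    · simp only [ungraft, if_neg h]
      show mapL Fin.castSucc (mapL (down k hk) (.node l r)) = .node l r
      rw [mapL_mapL]
      apply mapL_eq_self
      intro x hx
      obtain ⟨h1, h2, h3⟩ := ht
      have hx' : x ≤ rml r := h1 x hx
      have hxn : x ≠ Fin.last k := fun hxx => h (le_antisymm (Fin.le_last _) (hxx ▸ hx'))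
      exact castSucc_down hk hxn

end GraftAux

/-- **Theorem.** Let `k + 1 ≥ 2`.  Every posetted binary tree in
`ℬ(1 ≤ 2 ≤ ⋯ ≤ k+1)` (= monotone trees over `Fin (k+1)`) is obtained in a unique way by
choosing a posetted tree `(Γ, f) ∈ 𝒞(b ≤ a)` (monotone over `Fin 2`, every local
rightmost leaf labelled `a`) and grafting at every `b`-labelled leaf of `Γ` the root of a
posetted binary tree in `ℬ(1 ≤ ⋯ ≤ k)` (= monotone trees over `Fin k`), the `a`-labelled
leaves receiving the label `k+1` (top of the chain): i.e. `graftC k` is a bijection from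
the set of such pairs (encoded as trees over `Option (LTree (Fin k))`) onto
`ℬ(1 ≤ ⋯ ≤ k+1)`. -/
theorem graftC_bijOn (k : ℕ) (hk : 1 ≤ k) :
    Set.BijOn (graftC k)
      {T : LTree (Option (LTree (Fin k))) |
        (LTree.Mono (LTree.mapL shape T) ∧
          LTree.AllRlm (· = (1 : Fin 2)) (LTree.mapL shape T)) ∧
        ∀ s : LTree (Fin k), some s ∈ LTree.leafList T → LTree.Mono s}
      {t : LTree (Fin (k + 1)) | LTree.Mono t} := by
  refine Set.InvOn.bijOn (f' := ungraft k hk) ⟨?_, ?_⟩ ?_ ?_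
  · intro T hT
    exact ungraft_graftC hk hT.1.2
  · intro t ht
    exact graftC_ungraft hk ht
  · intro T hT
    exact mono_graftC hT.1.2 hT.2
  · intro t ht
    obtain ⟨a, s⟩ := ungraft_mem hk ht
    exact ⟨⟨mono_of_allRlm _ a, a⟩, s⟩
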